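/- Let {m_k} be the confluent Prony moments and let M_C = (m_{s+t})_{0≤s,t≤C−1} be the C×C Hankel matrix built from them. Then M_C is invertible if and only if the nodes ξ_1,…,ξ_n are pairwise distinct and all the highest magnitudes a_{i,l_i−1}, i = 1,…,n, are nonzero. -/

import Mathlib

open scoped BigOperators

noncomputable section

/-- The confluent Prony moments `m_k = Σ_i Σ_{j<l_i} a_{i,j} (k)_j ξ_i^{k-j}`,
where `(k)_j` is the falling factorial (so the term vanishes when `j > k`). -/
def pronyMoment {n : ℕ} (l : Fin n → ℕ) (ξ : Fin n → ℂ)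
    (a : (i : Fin n) → Fin (l i) → ℂ) (k : ℕ) : ℂ :=
  ∑ i, ∑ j : Fin (l i), a i j * (k.descFactorial j : ℂ) * ξ i ^ (k - (j : ℕ))

/-- Offset of the `i`-th block of columns: the sum of the multiplicities of all previous blocks. -/
def blockOff {n : ℕ} (L : Fin n → ℕ) (i : Fin n) : ℕ := ∑ i' ∈ Finset.Iio i, L i'

theorem blockOff_add_lt {n : ℕ} (L : Fin n → ℕ) (i : Fin n) {j : ℕ} (hj : j < L i) :
    blockOff L i + j < ∑ i', L i' := by
  have h1 : ∑ i' ∈ insert i (Finset.Iio i), L i' = ∑ i' ∈ Finset.Iio i, L i' + L i := by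
    rw [Finset.sum_insert (by simp)]; ring
  have h2 : ∑ i' ∈ insert i (Finset.Iio i), L i' ≤ ∑ i', L i' :=
    Finset.sum_le_sum_of_subset (Finset.subset_univ _)
  unfold blockOff
  omega

/-- The flattened index of position `j` inside block `i`, when block `i` has size `L i`. -/
def encC {n : ℕ} (L : Fin n → ℕ) (i : Fin n) (j : Fin (L i)) : Fin (∑ i', L i') :=
  ⟨blockOff L i + j, blockOff_add_lt L i j.isLt⟩

/-- The (square) confluent Vandermonde matrix on nodes `ξ_i` with multiplicities `L i`:
rows are indexed by `k = 0,…,(∑ L i)−1`; the entry in row `k` and column `j` of block `i`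
is `(k)_j ξ_i^{k−j}` (zero when `j > k`). -/
def confVand {n : ℕ} (L : Fin n → ℕ) (ξ : Fin n → ℂ) :
    Matrix (Fin (∑ i, L i)) (Fin (∑ i, L i)) ℂ :=
  fun k c => ∑ i, ∑ j : Fin (L i),
    if c = encC L i j then ((k : ℕ).descFactorial j : ℂ) * ξ i ^ ((k : ℕ) - (j : ℕ)) else 0

/-- The `l×l` magnitude block `B_i`: the `(s,t)` entry (0-based) is
`binom(s+t,s)·a_{s+t}` when `s+t ≤ l−1`, and `0` otherwise. -/
def magBlock (l : ℕ) (a : Fin l → ℂ) : Matrix (Fin l) (Fin l) ℂ :=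
  fun s t =>
    if h : (s : ℕ) + (t : ℕ) ≤ l - 1 then
      (((s : ℕ) + (t : ℕ)).choose (s : ℕ) : ℂ) *
        a ⟨(s : ℕ) + (t : ℕ), by have := s.isLt; omega⟩
    else 0

/-- The block-diagonal magnitude matrix `B = diag(B_1,…,B_n)`. -/
def magBlockMat {n : ℕ} (l : Fin n → ℕ) (a : (i : Fin n) → Fin (l i) → ℂ) :
    Matrix (Fin (∑ i, l i)) (Fin (∑ i, l i)) ℂ :=
  fun r c => ∑ i, ∑ s : Fin (l i), ∑ t : Fin (l i),
    if r = encC l i s ∧ c = encC l i t then magBlock (l i) (a i) s t else 0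

/-- The `C×C` Hankel matrix of the confluent Prony moments. -/
def pronyHankel {n : ℕ} (l : Fin n → ℕ) (ξ : Fin n → ℂ)
    (a : (i : Fin n) → Fin (l i) → ℂ) :
    Matrix (Fin (∑ i, l i)) (Fin (∑ i, l i)) ℂ :=
  fun s t => pronyMoment l ξ a ((s : ℕ) + (t : ℕ))

/-!
The Hankel matrix factors as `M_C = V B Vᵀ`, where `V` is the confluent Vandermonde matrix and
`B` is block diagonal with the blocks `B_i = (binom(s+t, s) a_{i,s+t})`. Entrywise this is the
Leibniz rule for `∂ʲ(X^s X^t)`, which expands `(s+t)_j ξ^{s+t-j}` as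
`∑ binom(j,k) (s)_k ξ^{s-k} (t)_{j-k} ξ^{t-j+k}`.

A vector `v` in the left kernel of `V` gives the polynomial `∑ v_k X^k` of degree `< C` whose
first `l_i` derivatives vanish at `ξ_i`; for distinct nodes it is divisible by
`∏ (X - ξ_i)^{l_i}`, of degree `C`, hence zero. Repeated nodes give two equal columns of `V`.
Each `B_i` vanishes below its antidiagonal, which carries `binom(l_i - 1, s) a_{i,l_i-1}`.
-/

open Matrix Polynomial Finset

/-- The Leibniz rule for `∂ʲ(X^t X^s)`, evaluated at `x`. -/
theorem descFactorial_add_mul_pow_eq_sum {R : Type*} [CommSemiring R] (x : R) (s t j : ℕ) :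
    ((s + t).descFactorial j : R) * x ^ (s + t - j) =
      ∑ k ∈ range (j + 1), ((k + (j - k)).choose k : R) *
        (((s.descFactorial k : R) * x ^ (s - k)) *
          ((t.descFactorial (j - k) : R) * x ^ (t - (j - k)))) := by
  have h := congrArg (eval x) (iterate_derivative_mul (n := j) (X ^ t : R[X]) (X ^ s))
  rw [← pow_add, add_comm t, iterate_derivative_X_pow_eq_smul] at h
  simp only [eval_smul, eval_pow, eval_X, smul_eq_mul, eval_finsetSum, nsmul_eq_mul, eval_mul,
    eval_natCast, iterate_derivative_X_pow_eq_smul] at h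
  rw [h]
  refine sum_congr rfl fun k hk => ?_
  rw [Nat.add_sub_cancel' (Nat.lt_succ_iff.mp (mem_range.mp hk))]
  ring

theorem sum_range_sum_range_ite_add_lt {M : Type*} [AddCommMonoid M] (l : ℕ) (g : ℕ → ℕ → M) :
    ∑ p ∈ range l, ∑ q ∈ range l, (if p + q < l then g p q else 0) =
      ∑ j ∈ range l, ∑ k ∈ range (j + 1), g k (j - k) := by
  rw [sum_range_diag_flip]
  refine sum_congr rfl fun p _ => ?_
  rw [← sum_filter]
  congr 1
  ext q
  simp only [mem_filter, mem_range]
  omega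

theorem sum_sum_mul_magBlock_mul (l : ℕ) (a : Fin l → ℂ) (x : ℂ) (s t : ℕ) :
    ∑ p : Fin l, ∑ q : Fin l,
      ((s.descFactorial p : ℂ) * x ^ (s - p)) * magBlock l a p q *
        ((t.descFactorial q : ℂ) * x ^ (t - q)) =
      ∑ j : Fin l, a j * ((s + t).descFactorial j : ℂ) * x ^ (s + t - j) := by
  let A : ℕ → ℂ := fun m => if h : m < l then a ⟨m, h⟩ else 0
  let g : ℕ → ℕ → ℂ := fun p q => A (p + q) * (((p + q).choose p : ℂ) *
    (((s.descFactorial p : ℂ) * x ^ (s - p)) * ((t.descFactorial q : ℂ) * x ^ (t - q))))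
  have hmagBlock (p q : Fin l) : magBlock l a p q =
      if (p : ℕ) + q < l then ((p + q : ℕ).choose p : ℂ) * A (p + q) else 0 := by
    by_cases h : (p : ℕ) + q < l
    · simp [magBlock, A, h, Nat.le_sub_one_of_lt h]
    · rw [if_neg h, magBlock, dif_neg (by omega)]
  calc _ = ∑ p ∈ range l, ∑ q ∈ range l, (if p + q < l then g p q else 0) := by
        rw [← Fin.sum_univ_eq_sum_range]
        refine sum_congr rfl fun p _ => ?_
        rw [← Fin.sum_univ_eq_sum_range]
        refine sum_congr rfl fun q _ => ?_
        rw [hmagBlock]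
        split_ifs
        · simp only [g]; ring
        · simp
    _ = ∑ j ∈ range l, ∑ k ∈ range (j + 1), g k (j - k) := sum_range_sum_range_ite_add_lt l g
    _ = _ := by
      rw [← Fin.sum_univ_eq_sum_range]
      refine sum_congr rfl fun j _ => ?_
      rw [mul_assoc, descFactorial_add_mul_pow_eq_sum, mul_sum]
      refine sum_congr rfl fun k hk => ?_
      have hkj : k + (j - k) = j := Nat.add_sub_cancel' (Nat.lt_succ_iff.mp (mem_range.mp hk))
      simp only [g, A, hkj, j.isLt, dif_pos, Fin.eta]

theorem Matrix.mul_blockDiagonal'_mul_transpose_apply {ι m m' R : Type*} [Fintype ι]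
    [DecidableEq ι] {o : ι → Type*} [∀ i, Fintype (o i)] [CommSemiring R]
    (A : Matrix m ((i : ι) × o i) R) (M : (i : ι) → Matrix (o i) (o i) R)
    (B : Matrix m' ((i : ι) × o i) R) (r : m) (c : m') :
    (A * blockDiagonal' M * Bᵀ) r c = ∑ i, ∑ p, ∑ q, A r ⟨i, p⟩ * M i p q * B c ⟨i, q⟩ := by
  have hrow (x : (i : ι) × o i) :
      (A * blockDiagonal' M) r x = ∑ p, A r ⟨x.1, p⟩ * M x.1 p x.2 := by
    obtain ⟨k, q⟩ := x
    rw [mul_apply, Fintype.sum_sigma, sum_eq_single k]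
    · simp only [blockDiagonal'_apply_eq]
    · intro i _ hi
      simp [blockDiagonal'_apply_ne _ _ _ hi]
    · simp
  rw [mul_apply, Fintype.sum_sigma]
  simp only [hrow, transpose_apply, sum_mul]
  refine sum_congr rfl fun i _ => ?_
  rw [sum_comm]

theorem Matrix.det_blockDiagonal' {ι R : Type*} [Fintype ι] [DecidableEq ι] [CommRing R]
    {o : ι → Type*} [∀ i, Fintype (o i)] [∀ i, DecidableEq (o i)]
    (M : (i : ι) → Matrix (o i) (o i) R) :
    (blockDiagonal' M).det = ∏ i, (M i).det := by
  let _ : LinearOrder ι := LinearOrder.lift' _ (Fintype.equivFin ι).injective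
  rw [(blockTriangular_blockDiagonal' M).det_fintype]
  refine prod_congr rfl fun i _ => ?_
  rw [← det_reindex_self (Equiv.sigmaSubtype i)]
  congr 1
  ext s t
  exact blockDiagonal'_apply_eq M i s t

def confluentVandermonde {R ι : Type*} [CommSemiring R] (N : ℕ) (L : ι → ℕ) (ξ : ι → R) :
    Matrix (Fin N) ((i : ι) × Fin (L i)) R :=
  fun k p => ((k : ℕ).descFactorial p.2 : R) * ξ p.1 ^ ((k : ℕ) - p.2)

theorem encC_eq_finSigmaFinEquiv {n : ℕ} (L : Fin n → ℕ) (i : Fin n) (j : Fin (L i)) :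
    encC L i j = finSigmaFinEquiv ⟨i, j⟩ := by
  have hIio : Iio i = univ.map (Fin.castLEEmb i.2.le) := by
    ext x
    simp only [mem_Iio, mem_map, mem_univ, true_and]
    exact ⟨fun h => ⟨⟨x, h⟩, rfl⟩, by rintro ⟨y, rfl⟩; exact y.2⟩
  ext
  rw [finSigmaFinEquiv_apply]
  show ∑ i' ∈ Iio i, L i' + j = _
  rw [hIio, Finset.sum_map]
  rfl

theorem confVand_eq_submatrix {n : ℕ} (L : Fin n → ℕ) (ξ : Fin n → ℂ) :
    confVand L ξ = (confluentVandermonde _ L ξ).submatrix id finSigmaFinEquiv.symm := by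
  ext k c
  obtain ⟨p, rfl⟩ := finSigmaFinEquiv.surjective c
  simp only [confVand, encC_eq_finSigmaFinEquiv, EmbeddingLike.apply_eq_iff_eq, submatrix_apply,
    id, Equiv.symm_apply_apply]
  rw [sum_sigma', univ_sigma_univ]
  simp [confluentVandermonde]

theorem magBlockMat_eq_submatrix {n : ℕ} (l : Fin n → ℕ) (a : (i : Fin n) → Fin (l i) → ℂ) :
    magBlockMat l a = (blockDiagonal' fun i => magBlock (l i) (a i)).submatrix
      finSigmaFinEquiv.symm finSigmaFinEquiv.symm := by
  ext r c
  obtain ⟨p, rfl⟩ := finSigmaFinEquiv.surjective r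
  obtain ⟨q, rfl⟩ := finSigmaFinEquiv.surjective c
  simp only [magBlockMat, encC_eq_finSigmaFinEquiv, EmbeddingLike.apply_eq_iff_eq, submatrix_apply,
    Equiv.symm_apply_apply]
  rw [sum_sigma', univ_sigma_univ, Fintype.sum_eq_single p fun x hx => by simp [Ne.symm hx]]
  obtain ⟨i, s⟩ := p
  obtain ⟨j, t⟩ := q
  by_cases hij : i = j
  · subst hij
    simp [blockDiagonal'_apply_eq]
  · simp [blockDiagonal'_apply_ne _ _ _ hij, Ne.symm hij]

theorem pronyHankel_eq_confVand_mul_magBlockMat_mul_transpose {n : ℕ} (l : Fin n → ℕ)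
    (ξ : Fin n → ℂ) (a : (i : Fin n) → Fin (l i) → ℂ) :
    pronyHankel l ξ a = confVand l ξ * magBlockMat l a * (confVand l ξ)ᵀ := by
  rw [confVand_eq_submatrix, magBlockMat_eq_submatrix, transpose_submatrix, submatrix_mul_equiv,
    submatrix_mul_equiv, submatrix_id_id]
  ext s t
  rw [mul_blockDiagonal'_mul_transpose_apply]
  simp only [confluentVandermonde, sum_sum_mul_magBlock_mul]
  rfl

theorem magBlock_submatrix_rev_isUpperTriangular (l : ℕ) (a : Fin l → ℂ) :
    ((magBlock l a).submatrix id Fin.revPerm).IsUpperTriangular := by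
  intro s t (hts : t < s)
  have hts' : (t : ℕ) < s := hts
  simp only [submatrix_apply, id, Fin.revPerm_apply, magBlock]
  rw [dif_neg (by rw [Fin.val_rev]; omega)]

theorem magBlock_apply_rev (l : ℕ) (a : Fin l → ℂ) (s : Fin l) :
    magBlock l a s s.rev = ((l - 1).choose s : ℂ) * a ⟨l - 1, by have := s.isLt; omega⟩ := by
  have hs : (s : ℕ) + (s.rev : ℕ) = l - 1 := by rw [Fin.val_rev]; omega
  simp only [magBlock, hs, le_refl, dif_pos]

theorem det_magBlock_ne_zero_iff {l : ℕ} (hl : 0 < l) (a : Fin l → ℂ) :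
    (magBlock l a).det ≠ 0 ↔ a ⟨l - 1, by omega⟩ ≠ 0 := by
  rw [← mul_ne_zero_iff_left (a := ((Equiv.Perm.sign (Fin.revPerm : Equiv.Perm (Fin l)) : ℤ) : ℂ))
    (by simp), ← det_permute',
    det_of_isUpperTriangular (magBlock_submatrix_rev_isUpperTriangular l a), prod_ne_zero_iff]
  simp only [submatrix_apply, id, Fin.revPerm_apply, magBlock_apply_rev, mul_ne_zero_iff]
  refine ⟨fun h => (h ⟨0, hl⟩ (mem_univ _)).2, fun h s _ => ⟨?_, h⟩⟩
  exact Nat.cast_ne_zero.mpr (Nat.choose_pos (by omega)).ne'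

theorem det_magBlockMat_ne_zero_iff {n : ℕ} {l : Fin n → ℕ} (hl : ∀ i, 0 < l i)
    (a : (i : Fin n) → Fin (l i) → ℂ) :
    (magBlockMat l a).det ≠ 0 ↔ ∀ i, a i ⟨l i - 1, by have := hl i; omega⟩ ≠ 0 := by
  rw [magBlockMat_eq_submatrix, det_submatrix_equiv_self, det_blockDiagonal', prod_ne_zero_iff]
  simp only [mem_univ, true_implies, det_magBlock_ne_zero_iff (hl _)]

theorem Polynomial.eval_iterate_derivative_ofFn {R : Type*} [CommSemiring R] [DecidableEq R]
    {N : ℕ} (v : Fin N → R) (j : ℕ) (x : R) :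
    (derivative^[j] (ofFn N v)).eval x =
      ∑ k : Fin N, v k * (((k : ℕ).descFactorial j : R) * x ^ ((k : ℕ) - j)) := by
  simp only [ofFn_eq_sum_monomial, iterate_derivative_sum, eval_finsetSum,
    ← C_mul_X_pow_eq_monomial, iterate_derivative_C_mul, iterate_derivative_X_pow_eq_smul,
    eval_mul, eval_C, eval_smul, eval_pow, eval_X, smul_eq_mul]

theorem vecMul_confluentVandermonde {R ι : Type*} [CommSemiring R] [DecidableEq R] [Fintype ι]
    {N : ℕ} (L : ι → ℕ) (ξ : ι → R) (v : Fin N → R) (p : (i : ι) × Fin (L i)) :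
    (v ᵥ* confluentVandermonde N L ξ) p = (derivative^[p.2] (ofFn N v)).eval (ξ p.1) := by
  rw [eval_iterate_derivative_ofFn]
  rfl

theorem eq_zero_of_vecMul_confluentVandermonde_eq_zero {K ι : Type*} [Field K] [CharZero K]
    [Fintype ι] {N : ℕ} {L : ι → ℕ} {ξ : ι → K} (hξ : Function.Injective ξ)
    (hN : N ≤ ∑ i, L i) {v : Fin N → K} (hv : v ᵥ* confluentVandermonde N L ξ = 0) : v = 0 := by
  classical
  have hdvd (i : ι) : (X - C (ξ i)) ^ L i ∣ ofFn N v := by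
    by_cases hP : ofFn N v = 0
    · simp [hP]
    rcases Nat.eq_zero_or_pos (L i) with h0 | hpos
    · simp [h0]
    have hroots : ∀ m ≤ L i - 1, (derivative^[m] (ofFn N v)).IsRoot (ξ i) := fun m hm => by
      rw [IsRoot, ← vecMul_confluentVandermonde L ξ v ⟨i, ⟨m, by omega⟩⟩, hv, Pi.zero_apply]
    have := lt_rootMultiplicity_of_isRoot_iterate_derivative hP hroots
    rw [← le_rootMultiplicity_iff hP]
    omega
  have hprod : ∏ i, (X - C (ξ i)) ^ L i ∣ ofFn N v :=
    Fintype.prod_dvd_of_coprime (fun i j hij => (pairwise_coprime_X_sub_C hξ hij).pow) hdvd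
  have hdeg : (ofFn N v).degree < (∏ i, (X - C (ξ i)) ^ L i).degree :=
    calc (ofFn N v).degree < N := ofFn_degree_lt v
      _ ≤ (∑ i, L i : ℕ) := by exact_mod_cast hN
      _ = _ := by
        rw [degree_prod]
        simp
  exact injective_ofFn N ((eq_zero_of_dvd_of_degree_lt hprod hdeg).trans (ofFn_zero N).symm)

theorem det_confVand_ne_zero_iff {n : ℕ} {L : Fin n → ℕ} (hL : ∀ i, 0 < L i) (ξ : Fin n → ℂ) :
    (confVand L ξ).det ≠ 0 ↔ Function.Injective ξ := by
  rw [confVand_eq_submatrix]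
  constructor
  · intro hdet i j hij
    by_contra hne
    refine hdet (det_zero_of_column_eq (i := finSigmaFinEquiv ⟨i, ⟨0, hL i⟩⟩)
      (j := finSigmaFinEquiv ⟨j, ⟨0, hL j⟩⟩) ?_ fun k => ?_)
    · simp [hne]
    · -- `e.symm (e p)` must be cancelled before unfolding: `p.2` has a type depending on `p.1`
      simp only [submatrix_apply, id, Equiv.symm_apply_apply]
      simp only [confluentVandermonde, hij]
  · intro hξ hdet
    obtain ⟨v, hv0, hv⟩ := exists_vecMul_eq_zero_iff.mpr hdet
    refine hv0 (eq_zero_of_vecMul_confluentVandermonde_eq_zero hξ le_rfl ?_)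
    ext p
    simpa only [vecMul, dotProduct, submatrix_apply, id, Equiv.symm_apply_apply, Pi.zero_apply]
      using congrFun hv (finSigmaFinEquiv p)

/-- the Hankel matrix `M_C = (m_{s+t})` of the confluent Prony moments is
invertible iff the nodes `ξ_1,…,ξ_n` are pairwise distinct and all the highest magnitudes
`a_{i,l_i−1}` are nonzero. -/
theorem pronyHankel_invertible_iff
    (n : ℕ) (l : Fin n → ℕ) (hl : ∀ i, 1 ≤ l i)
    (ξ : Fin n → ℂ) (a : (i : Fin n) → Fin (l i) → ℂ) :
    IsUnit (pronyHankel l ξ a) ↔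
      (∀ i j : Fin n, i ≠ j → ξ i ≠ ξ j) ∧
        ∀ i, a i ⟨l i - 1, by have := hl i; omega⟩ ≠ 0 := by
  rw [isUnit_iff_isUnit_det, pronyHankel_eq_confVand_mul_magBlockMat_mul_transpose, det_mul,
    det_mul, det_transpose, isUnit_iff_ne_zero, mul_ne_zero_iff, mul_ne_zero_iff,
    det_confVand_ne_zero_iff hl, det_magBlockMat_ne_zero_iff hl,
    Function.injective_iff_pairwise_ne]
  exact ⟨fun h => h.1, fun h => ⟨h, h.1⟩⟩
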